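/- For the standard normal density f and CDF F, the function x ↦ f(x)/F(x) is strictly decreasing on ℝ, and f(x)/F(x) > −x for all x ∈ ℝ (equivalently, the conditional mean E[Z | Z > t] > t for a standard normal Z and every real t). -/

import Mathlib

open MeasureTheory ProbabilityTheory Set

noncomputable def stdPDF (x : ℝ) : ℝ := (Real.sqrt (2 * Real.pi))⁻¹ * Real.exp (-x ^ 2 / 2)
noncomputable def stdCDF (x : ℝ) : ℝ := ∫ u in Set.Iic x, stdPDF u

/-!
Write `f = stdPDF` and `F = stdCDF`. Since `f' = -x f`, the derivative of `f / F` is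
`-f (f + x F) / F²`, and `-x < f / F` means `0 < f + x F`, so both claims come down to
`f x + x F x > 0`. Integrating `f' = -u f` over `(-∞, x]` gives `f x = -∫_{-∞}^x u f(u) du`,
hence `f x + x F x = ∫_{-∞}^x (x - u) f(u) du`, whose integrand is positive on `(-∞, x)`.
-/

theorem setIntegral_Iic_pos {φ : ℝ → ℝ} {x : ℝ} (hφ : ∀ u < x, 0 < φ u)
    (hint : IntegrableOn φ (Iic x)) : 0 < ∫ u in Iic x, φ u := by
  rw [integral_Iic_eq_integral_Iio]
  have hsupport : Function.support φ ∩ Iio x = Iio x :=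
    inter_eq_right.2 fun u hu => (hφ u hu).ne'
  refine (setIntegral_pos_iff_support_of_nonneg_ae ?_ (hint.mono_set Iio_subset_Iic_self)).2 ?_
  · exact (ae_restrict_iff' measurableSet_Iio).2 (ae_of_all _ fun u hu => (hφ u hu).le)
  · simp [hsupport]

theorem hasDerivAt_setIntegral_Iic {E : Type*} [NormedAddCommGroup E] [NormedSpace ℝ E]
    [CompleteSpace E] {φ : ℝ → E} (hφ : Continuous φ) (hint : Integrable φ) (x : ℝ) :
    HasDerivAt (fun y => ∫ u in Iic y, φ u) (φ x) x := by
  have hsplit :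
      (fun y => ∫ u in Iic y, φ u) = fun y => (∫ u in Iic 0, φ u) + ∫ u in 0..y, φ u := by
    funext y
    rw [← intervalIntegral.integral_Iic_sub_Iic hint.integrableOn hint.integrableOn]
    abel
  rw [hsplit]
  exact (intervalIntegral.integral_hasDerivAt_right hint.intervalIntegrable
    (hφ.stronglyMeasurableAtFilter _ _) hφ.continuousAt).const_add _

theorem stdPDF_pos (x : ℝ) : 0 < stdPDF x := by
  unfold stdPDF
  positivity

theorem continuous_stdPDF : Continuous stdPDF := by
  unfold stdPDF
  fun_prop

theorem stdPDF_eq_mul_exp_neg_mul_sq :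
    stdPDF = fun x => (Real.sqrt (2 * Real.pi))⁻¹ * Real.exp (-(1 / 2) * x ^ 2) := by
  funext x
  rw [stdPDF]
  ring_nf

theorem integrable_stdPDF : Integrable stdPDF := by
  simpa only [stdPDF_eq_mul_exp_neg_mul_sq] using
    (integrable_exp_neg_mul_sq (b := 1 / 2) (by norm_num)).const_mul (Real.sqrt (2 * Real.pi))⁻¹

theorem integrable_mul_stdPDF : Integrable fun x => x * stdPDF x := by
  simpa only [stdPDF_eq_mul_exp_neg_mul_sq, mul_left_comm] using
    (integrable_mul_exp_neg_mul_sq (b := 1 / 2) (by norm_num)).const_mul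
      (Real.sqrt (2 * Real.pi))⁻¹

theorem hasDerivAt_stdPDF (x : ℝ) : HasDerivAt stdPDF (-(x * stdPDF x)) x := by
  have hexp : HasDerivAt (fun y : ℝ => -y ^ 2 / 2) (-x) x :=
    ((hasDerivAt_pow 2 x).neg.div_const 2).congr_deriv (by ring)
  exact (((Real.hasDerivAt_exp _).comp x hexp).const_mul (Real.sqrt (2 * Real.pi))⁻¹).congr_deriv
    (by unfold stdPDF; ring)

theorem setIntegral_Iic_mul_stdPDF (x : ℝ) : ∫ u in Iic x, u * stdPDF u = -stdPDF x := by
  have hderiv : ∀ u ∈ Iic x, HasDerivAt stdPDF (-(u * stdPDF u)) u :=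
    fun u _ => hasDerivAt_stdPDF u
  have hint := integrable_mul_stdPDF.neg.integrableOn (s := Iic x)
  have hlim := tendsto_zero_of_hasDerivAt_of_integrableOn_Iic hderiv hint
    integrable_stdPDF.integrableOn
  rw [← neg_neg (∫ u in Iic x, u * stdPDF u), ← integral_neg,
    integral_Iic_of_hasDerivAt_of_tendsto' hderiv hint hlim, sub_zero]

theorem stdCDF_pos (x : ℝ) : 0 < stdCDF x :=
  setIntegral_Iic_pos (fun u _ => stdPDF_pos u) integrable_stdPDF.integrableOn

theorem hasDerivAt_stdCDF (x : ℝ) : HasDerivAt stdCDF (stdPDF x) x :=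
  hasDerivAt_setIntegral_Iic continuous_stdPDF integrable_stdPDF x

theorem stdPDF_add_mul_stdCDF_eq (x : ℝ) :
    stdPDF x + x * stdCDF x = ∫ u in Iic x, (x - u) * stdPDF u := by
  simp only [sub_mul]
  rw [integral_sub (integrable_stdPDF.const_mul x).integrableOn
      (integrable_mul_stdPDF.integrableOn), integral_const_mul, setIntegral_Iic_mul_stdPDF, stdCDF]
  ring

theorem stdPDF_add_mul_stdCDF_pos (x : ℝ) : 0 < stdPDF x + x * stdCDF x := by
  rw [stdPDF_add_mul_stdCDF_eq]
  refine setIntegral_Iic_pos (fun u hu => mul_pos (sub_pos.2 hu) (stdPDF_pos u)) ?_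
  refine ((integrable_stdPDF.const_mul x).sub integrable_mul_stdPDF).integrableOn.congr_fun
    (fun u _ => ?_) measurableSet_Iic
  simp only [Pi.sub_apply, sub_mul]

theorem hasDerivAt_stdPDF_div_stdCDF (x : ℝ) :
    HasDerivAt (fun y => stdPDF y / stdCDF y)
      (-(stdPDF x * (stdPDF x + x * stdCDF x)) / stdCDF x ^ 2) x :=
  ((hasDerivAt_stdPDF x).div (hasDerivAt_stdCDF x) (stdCDF_pos x).ne').congr_deriv (by ring)

theorem stmt13 :
    StrictAnti (fun x : ℝ => stdPDF x / stdCDF x) ∧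
    (∀ x : ℝ, -x < stdPDF x / stdCDF x) := by
  constructor
  · refine strictAnti_of_deriv_neg fun x => ?_
    rw [(hasDerivAt_stdPDF_div_stdCDF x).deriv]
    exact div_neg_of_neg_of_pos
      (neg_neg_of_pos (mul_pos (stdPDF_pos x) (stdPDF_add_mul_stdCDF_pos x)))
      (pow_pos (stdCDF_pos x) 2)
  · intro x
    rw [lt_div_iff₀ (stdCDF_pos x)]
    linarith [stdPDF_add_mul_stdCDF_pos x]
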